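/- arXiv:1605.07500 — 2 statements merged into one kernel-verified Lean document; each statement's English description precedes it below -/
import Mathlib

section
/- Subsolution construction: for any M ∈ M_D and r ∈ A_0, the process Y^{low} defined by Y^{low}_j := E_j[θ^{low}_j(r,M)] is a subsolution to the dynamic program; in particular Y^{low}_j = r_j^⊤ E_j[β_{j+1} θ^{low}_{j+1}] − F_j^{#}(r_j) ≤ F_j(E_j[β_{j+1} Y^{low}_{j+1}]) P-a.s. for every j = 0,...,J-1. -/
open MeasureTheory
open scoped ENNReal

noncomputable section

variable {Ω : Type*} {m0 : MeasurableSpace Ω}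

/-- `L^{∞-}`: membership in `L^p` for every finite `p ≥ 1`. -/
def MemLinfMinus {E : Type*} [NormedAddCommGroup E] (μ : Measure Ω) (f : Ω → E) : Prop :=
  ∀ p : ℝ≥0∞, 1 ≤ p → p ≠ ⊤ → MemLp f p μ

/-- Euclidean dot product on `Fin D → ℝ`. -/
def dotp {D : ℕ} (x y : Fin D → ℝ) : ℝ := ∑ d, x d * y d

/-- Componentwise conditional expectation of an `ℝ^D`-valued random vector. -/
def cexpV (μ : Measure Ω) (m : MeasurableSpace Ω) {D : ℕ} (f : Ω → Fin D → ℝ) :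
    Ω → Fin D → ℝ :=
  fun ω d => (μ[fun ω' => f ω' d|m]) ω

/-- The `ℝ^D`-valued process `β_j Y_j` (vector weight times scalar process). -/
def bprod {D : ℕ} (β : ℕ → Ω → Fin D → ℝ) (Y : ℕ → Ω → ℝ) (j : ℕ) : Ω → Fin D → ℝ :=
  fun ω d => β j ω d * Y j ω

/-- Convex (Fenchel) conjugate, with values in `EReal`. -/
def econj {D : ℕ} (f : (Fin D → ℝ) → ℝ) (u : Fin D → ℝ) : EReal :=
  ⨆ z : Fin D → ℝ, ((dotp u z - f z : ℝ) : EReal)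

/-- Real-valued version of the convex conjugate (meaningful where the conjugate is finite). -/
def rconj {D : ℕ} (f : (Fin D → ℝ) → ℝ) (u : Fin D → ℝ) : ℝ := (econj f u).toReal

/-- The Doob martingale of an `ℝ^D`-valued process `Z`:
`j ↦ ∑_{i=0}^{j-1} (Z_{i+1} - E_i[Z_{i+1}])`. -/
def doobMart (μ : Measure Ω) (ℱ : Filtration ℕ m0) {D : ℕ} (Z : ℕ → Ω → Fin D → ℝ) :
    ℕ → Ω → Fin D → ℝ :=
  fun j ω d => ∑ i ∈ Finset.range j, (Z (i + 1) ω d - cexpV μ (ℱ i) (Z (i + 1)) ω d)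

/-- Standing assumptions on the data `(F, β, ξ)` of the convex dynamic program:
measurability, adaptedness and convexity of the generator, polynomial growth with an
`L^{∞-}` coefficient, and integrability/adaptedness of the weights and terminal condition. -/
structure Setting (μ : Measure Ω) (ℱ : Filtration ℕ m0) (J D : ℕ)
    (F : ℕ → Ω → (Fin D → ℝ) → ℝ) (β : ℕ → Ω → Fin D → ℝ) (ξ : Ω → ℝ) : Prop where
  F_meas : ∀ j < J, Measurable fun p : Ω × (Fin D → ℝ) => F j p.1 p.2
  F_adapted : ∀ j < J, ∀ z : Fin D → ℝ, StronglyMeasurable[ℱ j] fun ω => F j ω z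
  F_convex : ∀ j < J, ∀ ω, ConvexOn ℝ Set.univ (F j ω)
  F_growth : ∃ q : ℝ, 0 ≤ q ∧ ∃ α : ℕ → Ω → ℝ,
      (∀ j < J, StronglyMeasurable[ℱ j] (α j)) ∧
      (∀ j < J, ∀ᵐ ω ∂μ, 0 ≤ α j ω) ∧ (∀ j < J, MemLinfMinus μ (α j)) ∧
      ∀ j < J, ∀ z : Fin D → ℝ, ∀ᵐ ω ∂μ, |F j ω z| ≤ α j ω * (1 + ‖z‖ ^ q)
  β_adapted : ∀ j ≤ J, StronglyMeasurable[ℱ j] (β j)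
  β_int : ∀ j ≤ J, MemLinfMinus μ (β j)
  ξ_meas : StronglyMeasurable[ℱ J] ξ
  ξ_int : MemLinfMinus μ ξ

/-- `Y` is an adapted `L^{∞-}` solution of the dynamic programming equation
`Y_j = F_j(E_j[β_{j+1} Y_{j+1}])`, `Y_J = ξ`. -/
def IsSolution (μ : Measure Ω) (ℱ : Filtration ℕ m0) (J D : ℕ)
    (F : ℕ → Ω → (Fin D → ℝ) → ℝ) (β : ℕ → Ω → Fin D → ℝ) (ξ : Ω → ℝ)
    (Y : ℕ → Ω → ℝ) : Prop :=
  (∀ j ≤ J, StronglyMeasurable[ℱ j] (Y j) ∧ MemLinfMinus μ (Y j)) ∧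
  (∀ᵐ ω ∂μ, Y J ω = ξ ω) ∧
  (∀ j < J, ∀ᵐ ω ∂μ, Y j ω = F j ω (cexpV μ (ℱ j) (bprod β Y (j + 1)) ω))

/-- Supersolution of the dynamic program. -/
def IsSupersolution (μ : Measure Ω) (ℱ : Filtration ℕ m0) (J D : ℕ)
    (F : ℕ → Ω → (Fin D → ℝ) → ℝ) (β : ℕ → Ω → Fin D → ℝ) (ξ : Ω → ℝ)
    (Y : ℕ → Ω → ℝ) : Prop :=
  (∀ j ≤ J, StronglyMeasurable[ℱ j] (Y j) ∧ MemLinfMinus μ (Y j)) ∧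
  (∀ᵐ ω ∂μ, ξ ω ≤ Y J ω) ∧
  (∀ j < J, ∀ᵐ ω ∂μ, F j ω (cexpV μ (ℱ j) (bprod β Y (j + 1)) ω) ≤ Y j ω)

/-- Subsolution of the dynamic program. -/
def IsSubsolution (μ : Measure Ω) (ℱ : Filtration ℕ m0) (J D : ℕ)
    (F : ℕ → Ω → (Fin D → ℝ) → ℝ) (β : ℕ → Ω → Fin D → ℝ) (ξ : Ω → ℝ)
    (Y : ℕ → Ω → ℝ) : Prop :=
  (∀ j ≤ J, StronglyMeasurable[ℱ j] (Y j) ∧ MemLinfMinus μ (Y j)) ∧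
  (∀ᵐ ω ∂μ, Y J ω ≤ ξ ω) ∧
  (∀ j < J, ∀ᵐ ω ∂μ, Y j ω ≤ F j ω (cexpV μ (ℱ j) (bprod β Y (j + 1)) ω))

/-- The monotonicity assumption: `Y⁽¹⁾ ≥ Y⁽²⁾` a.s. implies
`F_j(β_{j+1} Y⁽¹⁾) ≥ F_j(β_{j+1} Y⁽²⁾)` a.s. -/
def MonoAssumption (μ : Measure Ω) (J D : ℕ)
    (F : ℕ → Ω → (Fin D → ℝ) → ℝ) (β : ℕ → Ω → Fin D → ℝ) : Prop :=
  ∀ j < J, ∀ Y1 Y2 : Ω → ℝ, MemLinfMinus μ Y1 → MemLinfMinus μ Y2 →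
    (∀ᵐ ω ∂μ, Y2 ω ≤ Y1 ω) →
    ∀ᵐ ω ∂μ, F j ω (fun d => β (j + 1) ω d * Y2 ω) ≤ F j ω (fun d => β (j + 1) ω d * Y1 ω)

/-- The class `M_D` of `ℝ^D`-valued `L^{∞-}` martingales. -/
def IsMartD (μ : Measure Ω) (ℱ : Filtration ℕ m0) {D : ℕ}
    (M : ℕ → Ω → Fin D → ℝ) : Prop :=
  Martingale M ℱ μ ∧ ∀ j, MemLinfMinus μ (M j)

/-- Admissible controls on the time indices `{j₀, ..., J-1}` (the class `A_{j₀}`). -/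
def IsAdmissibleFrom (μ : Measure Ω) (ℱ : Filtration ℕ m0) (j₀ J D : ℕ)
    (F : ℕ → Ω → (Fin D → ℝ) → ℝ) (r : ℕ → Ω → Fin D → ℝ) : Prop :=
  ∀ i, j₀ ≤ i → i < J →
    StronglyMeasurable[ℱ i] (r i) ∧ MemLinfMinus μ (r i) ∧
    (∀ᵐ ω ∂μ, econj (F i ω) (r i ω) ≠ ⊤) ∧
    MemLinfMinus μ (fun ω => rconj (F i ω) (r i ω))

/-- The lower pathwise recursion `θ^{low}(r, M)`:
`θ_J = ξ`, `θ_i = r_i^⊤ (β_{i+1} θ_{i+1}) - r_i^⊤ ΔM_{i+1} - F_i^{#}(r_i)`,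
required on the time indices `{j₀, ..., J-1}`. -/
def IsThetaLowFrom (μ : Measure Ω) (j₀ J D : ℕ)
    (F : ℕ → Ω → (Fin D → ℝ) → ℝ) (β : ℕ → Ω → Fin D → ℝ) (ξ : Ω → ℝ)
    (r M : ℕ → Ω → Fin D → ℝ) (θ : ℕ → Ω → ℝ) : Prop :=
  (∀ᵐ ω ∂μ, θ J ω = ξ ω) ∧
  ∀ i, j₀ ≤ i → i < J → ∀ᵐ ω ∂μ,
    θ i ω = dotp (r i ω) (fun d => β (i + 1) ω d * θ (i + 1) ω)
      - dotp (r i ω) (fun d => M (i + 1) ω d - M i ω d) - rconj (F i ω) (r i ω)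

/-- The upper pathwise recursion `θ^{up}(M)`:
`θ_J = ξ`, `θ_j = F_j(β_{j+1} θ_{j+1} - ΔM_{j+1})`. -/
def IsThetaUp (μ : Measure Ω) (J D : ℕ)
    (F : ℕ → Ω → (Fin D → ℝ) → ℝ) (β : ℕ → Ω → Fin D → ℝ) (ξ : Ω → ℝ)
    (M : ℕ → Ω → Fin D → ℝ) (θ : ℕ → Ω → ℝ) : Prop :=
  (∀ᵐ ω ∂μ, θ J ω = ξ ω) ∧
  ∀ j < J, ∀ᵐ ω ∂μ,
    θ j ω = F j ω (fun d => β (j + 1) ω d * θ (j + 1) ω - (M (j + 1) ω d - M j ω d))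

/-- The optimality condition `r_i^⊤ E_i[β_{i+1} Y_{i+1}] - F_i^{#}(r_i) = F_i(E_i[β_{i+1} Y_{i+1}])`
on the time indices `{j₀, ..., J-1}`. -/
def OptimalityCond (μ : Measure Ω) (ℱ : Filtration ℕ m0) (j₀ J D : ℕ)
    (F : ℕ → Ω → (Fin D → ℝ) → ℝ) (β : ℕ → Ω → Fin D → ℝ)
    (Y : ℕ → Ω → ℝ) (r : ℕ → Ω → Fin D → ℝ) : Prop :=
  ∀ i, j₀ ≤ i → i < J → ∀ᵐ ω ∂μ,
    dotp (r i ω) (cexpV μ (ℱ i) (bprod β Y (i + 1)) ω) - rconj (F i ω) (r i ω)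
      = F i ω (cexpV μ (ℱ i) (bprod β Y (i + 1)) ω)

/-! Conditioning the recursion for `θ_j` on `ℱ_j`, the martingale increment drops out while
`r_j` and `F_j^#(r_j)` are `ℱ_j`-measurable, so `E_j[θ_j] = r_jᵀ E_j[β_{j+1} θ_{j+1}] - F_j^#(r_j)`.
The tower property replaces `θ_{j+1}` by `E_{j+1}[θ_{j+1}]` inside `E_j[β_{j+1} ·]`, and the
Fenchel–Young inequality `rᵀz - F^#(r) ≤ F(z)` yields the subsolution inequality. All
integrability comes from `L^{∞-}` being closed under products (Hölder) and conditional
expectations. -/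

open Filter

namespace MemLinfMinus

variable {μ : Measure Ω} {E : Type*} [NormedAddCommGroup E] {f g : Ω → E}

theorem integrable (hf : MemLinfMinus μ f) : Integrable f μ :=
  memLp_one_iff_integrable.mp (hf 1 le_rfl ENNReal.one_ne_top)

theorem congr (hf : MemLinfMinus μ f) (h : f =ᵐ[μ] g) : MemLinfMinus μ g :=
  fun p hp hpt => (hf p hp hpt).ae_eq h

theorem sub (hf : MemLinfMinus μ f) (hg : MemLinfMinus μ g) : MemLinfMinus μ (f - g) :=
  fun p hp hpt => (hf p hp hpt).sub (hg p hp hpt)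

theorem eval {ι : Type*} [Fintype ι] {E : ι → Type*} [∀ i, NormedAddCommGroup (E i)]
    {f : Ω → ∀ i, E i} (hf : MemLinfMinus μ f) (i : ι) : MemLinfMinus μ fun ω => f ω i :=
  fun p hp hpt => (hf p hp hpt).eval i

theorem condExp [NormedSpace ℝ E] [CompleteSpace E] {m : MeasurableSpace Ω}
    (hf : MemLinfMinus μ f) : MemLinfMinus μ (μ[f|m]) :=
  fun p hp hpt => (hf p hp hpt).condExp hp

-- Hölder with exponents `2p, 2p, p`.
theorem mul {𝕜 : Type*} [NormedRing 𝕜] {f g : Ω → 𝕜} (hf : MemLinfMinus μ f)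
    (hg : MemLinfMinus μ g) :
    MemLinfMinus μ fun ω => f ω * g ω := by
  intro p hp hpt
  have h2p : 1 ≤ 2 * p := hp.trans (le_mul_of_one_le_left bot_le one_le_two)
  have : ENNReal.HolderTriple (2 * p) (2 * p) p :=
    ⟨by rw [← two_mul, ENNReal.mul_inv (by simp) (by simp), ← mul_assoc,
      ENNReal.mul_inv_cancel two_ne_zero ENNReal.ofNat_ne_top, one_mul]⟩
  exact (hg (2 * p) h2p (ENNReal.mul_ne_top (by simp) hpt)).mul'
    (hf (2 * p) h2p (ENNReal.mul_ne_top (by simp) hpt))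

theorem sum {ι : Type*} {s : Finset ι} {f : ι → Ω → E} (hf : ∀ i ∈ s, MemLinfMinus μ (f i)) :
    MemLinfMinus μ fun ω => ∑ i ∈ s, f i ω := fun p hp hpt => by
  simpa only [Finset.sum_apply] using memLp_finsetSum s fun i hi => hf i hi p hp hpt

theorem dotp {D : ℕ} {u v : Ω → Fin D → ℝ} (hu : ∀ d, MemLinfMinus μ fun ω => u ω d)
    (hv : ∀ d, MemLinfMinus μ fun ω => v ω d) : MemLinfMinus μ fun ω => dotp (u ω) (v ω) :=
  sum fun d _ => (hu d).mul (hv d)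

end MemLinfMinus

theorem iSup_eq_iSup_comp_of_denseRange {X ι α : Type*} [TopologicalSpace X]
    [CompleteLinearOrder α] [TopologicalSpace α] [OrderClosedTopology α] {g : X → α}
    (hg : Continuous g) {e : ι → X} (he : DenseRange e) : ⨆ x, g x = ⨆ i, g (e i) :=
  le_antisymm
    (iSup_le fun x =>
      he.induction_on x (isClosed_le hg continuous_const) fun i => le_iSup (g ∘ e) i)
    (iSup_le fun i => le_iSup g (e i))

section Conjugate

variable {D : ℕ}

theorem continuous_dotp_right (u : Fin D → ℝ) : Continuous (dotp u) := by
  unfold dotp; fun_prop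

theorem dotp_sub_rconj_le {f : (Fin D → ℝ) → ℝ} {u : Fin D → ℝ} (h : econj f u ≠ ⊤)
    (z : Fin D → ℝ) : dotp u z - rconj f u ≤ f z := by
  have hz : ((dotp u z - f z : ℝ) : EReal) ≤ econj f u :=
    le_iSup (fun z => ((dotp u z - f z : ℝ) : EReal)) z
  have := EReal.toReal_le_toReal hz (EReal.coe_ne_bot _) h
  rw [EReal.toReal_coe] at this
  unfold rconj
  linarith

-- The supremum defining the conjugate may be taken over a countable dense set.
theorem measurable_econj {m : MeasurableSpace Ω} {F : Ω → (Fin D → ℝ) → ℝ}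
    (hF : ∀ z, Measurable[m] fun ω => F ω z) (hcont : ∀ ω, Continuous (F ω))
    {r : Ω → Fin D → ℝ} (hr : Measurable[m] r) :
    Measurable[m] fun ω => econj (F ω) (r ω) := by
  let e := TopologicalSpace.denseSeq (Fin D → ℝ)
  have he : DenseRange e := TopologicalSpace.denseRange_denseSeq _
  have hsup : ∀ ω, econj (F ω) (r ω) = ⨆ n, ((dotp (r ω) (e n) - F ω (e n) : ℝ) : EReal) :=
    fun ω => iSup_eq_iSup_comp_of_denseRange
      (continuous_coe_real_ereal.comp ((continuous_dotp_right _).sub (hcont ω))) he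
  simp_rw [hsup]
  refine Measurable.iSup fun n => (Measurable.sub ?_ (hF (e n))).coe_real_ereal
  unfold dotp
  fun_prop

end Conjugate

theorem Setting.stronglyMeasurable_rconj {μ : Measure Ω} {ℱ : Filtration ℕ m0} {J D : ℕ}
    {F : ℕ → Ω → (Fin D → ℝ) → ℝ} {β : ℕ → Ω → Fin D → ℝ} {ξ : Ω → ℝ}
    (hset : Setting μ ℱ J D F β ξ) {j : ℕ} (hj : j < J) {r : Ω → Fin D → ℝ}
    (hr : StronglyMeasurable[ℱ j] r) : StronglyMeasurable[ℱ j] fun ω => rconj (F j ω) (r ω) :=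
  (measurable_econj (fun z => (hset.F_adapted j hj z).measurable)
    (fun ω => continuousOn_univ.mp ((hset.F_convex j hj ω).continuousOn isOpen_univ))
    hr.measurable).ereal_toReal.stronglyMeasurable

section CondExp

variable {μ : Measure Ω} {D : ℕ}

theorem cexpV_ae_eq_condExp {m : MeasurableSpace Ω} {f : Ω → Fin D → ℝ} (hf : Integrable f μ) :
    cexpV μ m f =ᵐ[μ] μ[f|m] := by
  have h : ∀ d, (fun ω => (μ[f|m]) ω d) =ᵐ[μ] μ[fun ω => f ω d|m] :=
    fun d => (ContinuousLinearMap.proj (R := ℝ) (φ := fun _ : Fin D => ℝ) d).comp_condExp_comm hf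
  filter_upwards [ae_all_iff.2 h] with ω hω
  funext d
  exact (hω d).symm

theorem MeasureTheory.Martingale.cexpV_increment_ae_eq_zero {ℱ : Filtration ℕ m0}
    {M : ℕ → Ω → Fin D → ℝ} (hM : Martingale M ℱ μ) (j : ℕ) :
    cexpV μ (ℱ j) (fun ω d => M (j + 1) ω d - M j ω d) =ᵐ[μ] 0 := by
  have hint := hM.integrable
  filter_upwards [cexpV_ae_eq_condExp (m := ℱ j) ((hint (j + 1)).sub (hint j)),
    condExp_sub (hint (j + 1)) (hint j) (ℱ j), hM.condExp_ae_eq j.le_succ,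
    hM.condExp_ae_eq le_rfl] with ω h h_sub h_succ h_self
  simp only [Pi.sub_def] at h h_sub
  rw [h, h_sub, h_succ, h_self]
  exact funext fun d => sub_self _

theorem condExp_dotp_of_stronglyMeasurable_left {m : MeasurableSpace Ω} {u X : Ω → Fin D → ℝ}
    (hu : StronglyMeasurable[m] u) (huX : ∀ d, Integrable (fun ω => u ω d * X ω d) μ)
    (hX : ∀ d, Integrable (fun ω => X ω d) μ) :
    μ[fun ω => dotp (u ω) (X ω)|m] =ᵐ[μ] fun ω => dotp (u ω) (cexpV μ m X ω) := by
  have hsum : (fun ω => dotp (u ω) (X ω)) = ∑ d, fun ω => u ω d * X ω d := by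
    ext ω; simp [dotp]
  have hpull : ∀ d, μ[fun ω => u ω d * X ω d|m] =ᵐ[μ] fun ω => u ω d * cexpV μ m X ω d :=
    fun d => condExp_mul_of_stronglyMeasurable_left
      ((continuous_apply d).comp_stronglyMeasurable hu) (huX d) (hX d)
  rw [hsum]
  filter_upwards [condExp_finsetSum (s := Finset.univ) (fun d _ => huX d) m, ae_all_iff.2 hpull]
    with ω h hd
  rw [h, Finset.sum_apply]
  exact Finset.sum_congr rfl fun d _ => hd d

theorem cexpV_mul_condExp {m m' : MeasurableSpace Ω} (hmm' : m ≤ m') (hm' : m' ≤ m0)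
    [SigmaFinite (μ.trim hm')] {b : Ω → Fin D → ℝ} {Y : Ω → ℝ} (hb : StronglyMeasurable[m'] b)
    (hbY : ∀ d, Integrable (fun ω => b ω d * Y ω) μ) (hY : Integrable Y μ) :
    cexpV μ m (fun ω d => b ω d * Y ω) =ᵐ[μ] cexpV μ m (fun ω d => b ω d * (μ[Y|m']) ω) := by
  have h : ∀ d, μ[fun ω => b ω d * Y ω|m] =ᵐ[μ] μ[fun ω => b ω d * (μ[Y|m']) ω|m] := fun d =>
    (condExp_condExp_of_le hmm' hm').symm.trans
      (condExp_congr_ae (condExp_mul_of_stronglyMeasurable_left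
        ((continuous_apply d).comp_stronglyMeasurable hb) (hbY d) hY))
  filter_upwards [ae_all_iff.2 h] with ω hω
  funext d
  exact hω d

end CondExp

section ThetaLow

variable {μ : Measure Ω} {ℱ : Filtration ℕ m0} {j₀ J D : ℕ} {F : ℕ → Ω → (Fin D → ℝ) → ℝ}
  {β : ℕ → Ω → Fin D → ℝ} {ξ : Ω → ℝ} {r M : ℕ → Ω → Fin D → ℝ} {θ : ℕ → Ω → ℝ}

theorem IsThetaLowFrom.memLinfMinus (hθ : IsThetaLowFrom μ j₀ J D F β ξ r M θ)
    (hξ : MemLinfMinus μ ξ) (hβ : ∀ j ≤ J, MemLinfMinus μ (β j))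
    (hM : ∀ j, MemLinfMinus μ (M j)) (hr : IsAdmissibleFrom μ ℱ j₀ J D F r)
    {j : ℕ} (hj₀ : j₀ ≤ j) (hj : j ≤ J) : MemLinfMinus μ (θ j) := by
  induction hj using Nat.decreasingInduction with
  | self => exact hξ.congr (EventuallyEq.symm hθ.1)
  | of_succ k hk ih =>
    obtain ⟨-, hr_mem, -, hC_mem⟩ := hr k hj₀ hk
    have hA := MemLinfMinus.dotp hr_mem.eval fun d => ((hβ (k + 1) hk).eval d).mul (ih (by omega))
    have hB := MemLinfMinus.dotp hr_mem.eval fun d => ((hM (k + 1)).eval d).sub ((hM k).eval d)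
    exact ((hA.sub hB).sub hC_mem).congr ((hθ.2 k hj₀ hk).mono fun ω h => h.symm)

theorem IsThetaLowFrom.condExp_ae_eq (hθ : IsThetaLowFrom μ j₀ J D F β ξ r M θ)
    (hM : IsMartD μ ℱ M) (hr : IsAdmissibleFrom μ ℱ j₀ J D F r) {j : ℕ} (hj₀ : j₀ ≤ j)
    (hj : j < J) (hβ : MemLinfMinus μ (β (j + 1))) (hθ' : MemLinfMinus μ (θ (j + 1)))
    (hC : StronglyMeasurable[ℱ j] fun ω => rconj (F j ω) (r j ω))
    [SigmaFinite (μ.trim (ℱ.le j))] :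
    μ[θ j|ℱ j] =ᵐ[μ] fun ω =>
      dotp (r j ω) (cexpV μ (ℱ j) (bprod β θ (j + 1)) ω) - rconj (F j ω) (r j ω) := by
  obtain ⟨hr_meas, hr_mem, -, hC_mem⟩ := hr j hj₀ hj
  have hbθ : ∀ d, MemLinfMinus μ fun ω => bprod β θ (j + 1) ω d :=
    fun d => (hβ.eval d).mul hθ'
  have hΔM : ∀ d, MemLinfMinus μ fun ω => M (j + 1) ω d - M j ω d :=
    fun d => ((hM.2 (j + 1)).eval d).sub ((hM.2 j).eval d)
  have hA := (MemLinfMinus.dotp hr_mem.eval hbθ).integrable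
  have hB := (MemLinfMinus.dotp hr_mem.eval hΔM).integrable
  filter_upwards [(condExp_congr_ae (hθ.2 j hj₀ hj)).trans
      (condExp_sub (hA.sub hB) hC_mem.integrable (ℱ j)), condExp_sub hA hB (ℱ j),
    condExp_dotp_of_stronglyMeasurable_left hr_meas
      (fun d => ((hr_mem.eval d).mul (hbθ d)).integrable) fun d => (hbθ d).integrable,
    condExp_dotp_of_stronglyMeasurable_left hr_meas
      (fun d => ((hr_mem.eval d).mul (hΔM d)).integrable) fun d => (hΔM d).integrable,
    hM.1.cexpV_increment_ae_eq_zero j] with ω h_θ h_subB h_A h_B h_ΔM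
  rw [h_θ, Pi.sub_apply, h_subB, Pi.sub_apply, h_A, h_B, h_ΔM,
    condExp_of_stronglyMeasurable (ℱ.le j) hC hC_mem.integrable]
  simp [dotp]

theorem IsThetaLowFrom.condExp_ae_eq_and_le [IsFiniteMeasure μ]
    (hset : Setting μ ℱ J D F β ξ) (hθ : IsThetaLowFrom μ j₀ J D F β ξ r M θ)
    (hM : IsMartD μ ℱ M) (hr : IsAdmissibleFrom μ ℱ j₀ J D F r) {j : ℕ} (hj₀ : j₀ ≤ j)
    (hj : j < J) :
    ∀ᵐ ω ∂μ,
      (μ[θ j|ℱ j]) ω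
          = dotp (r j ω) (cexpV μ (ℱ j) (bprod β θ (j + 1)) ω) - rconj (F j ω) (r j ω) ∧
      (μ[θ j|ℱ j]) ω
          ≤ F j ω (cexpV μ (ℱ j) (bprod β (fun i => μ[θ i|ℱ i]) (j + 1)) ω) := by
  obtain ⟨hr_meas, -, hr_conj, -⟩ := hr j hj₀ hj
  have hβ := hset.β_int (j + 1) hj
  have hθ' := hθ.memLinfMinus hset.ξ_int hset.β_int hM.2 hr (hj₀.trans j.le_succ) hj
  filter_upwards [hθ.condExp_ae_eq hM hr hj₀ hj hβ hθ' (hset.stronglyMeasurable_rconj hj hr_meas),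
    cexpV_mul_condExp (ℱ.mono j.le_succ) (ℱ.le (j + 1)) (hset.β_adapted (j + 1) hj)
      (fun d => ((hβ.eval d).mul hθ').integrable) hθ'.integrable,
    hr_conj] with ω h_eq h_tower h_conj
  refine ⟨h_eq, ?_⟩
  calc (μ[θ j|ℱ j]) ω
      = dotp (r j ω) (cexpV μ (ℱ j) (bprod β θ (j + 1)) ω) - rconj (F j ω) (r j ω) := h_eq
    _ ≤ F j ω (cexpV μ (ℱ j) (bprod β θ (j + 1)) ω) := dotp_sub_rconj_le h_conj _
    _ = F j ω (cexpV μ (ℱ j) (bprod β (fun i => μ[θ i|ℱ i]) (j + 1)) ω) :=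
      congrArg (F j ω) h_tower

end ThetaLow

/-- Subsolution construction: for any `M ∈ M_D` and `r ∈ A_0`, the process
`Y^{low}_j := E_j[θ^{low}_j(r,M)]` is a subsolution to the dynamic program; in particular
`Y^{low}_j = r_j^⊤ E_j[β_{j+1} θ^{low}_{j+1}] − F_j^{#}(r_j) ≤ F_j(E_j[β_{j+1} Y^{low}_{j+1}])`
`P`-a.s. for every `j = 0,…,J-1`. -/
theorem subsolution_construction
    (μ : Measure Ω) [IsProbabilityMeasure μ] (ℱ : Filtration ℕ m0)
    (J D : ℕ) (F : ℕ → Ω → (Fin D → ℝ) → ℝ) (β : ℕ → Ω → Fin D → ℝ) (ξ : Ω → ℝ)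
    (hset : Setting μ ℱ J D F β ξ)
    (M : ℕ → Ω → Fin D → ℝ) (hM : IsMartD μ ℱ M)
    (r : ℕ → Ω → Fin D → ℝ) (hr : IsAdmissibleFrom μ ℱ 0 J D F r)
    (θ : ℕ → Ω → ℝ) (hθ : IsThetaLowFrom μ 0 J D F β ξ r M θ) :
    IsSubsolution μ ℱ J D F β ξ (fun j => μ[θ j|ℱ j]) ∧
    ∀ j < J, ∀ᵐ ω ∂μ,
      (μ[θ j|ℱ j]) ω
          = dotp (r j ω) (cexpV μ (ℱ j) (bprod β θ (j + 1)) ω) - rconj (F j ω) (r j ω) ∧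
      (μ[θ j|ℱ j]) ω
          ≤ F j ω (cexpV μ (ℱ j) (bprod β (fun i => μ[θ i|ℱ i]) (j + 1)) ω) := by
  have hstep := fun j (hj : j < J) => hθ.condExp_ae_eq_and_le hset hM hr j.zero_le hj
  have h_terminal : μ[θ J|ℱ J] =ᵐ[μ] ξ := (condExp_congr_ae hθ.1).trans
    (.of_eq (condExp_of_stronglyMeasurable (ℱ.le J) hset.ξ_meas hset.ξ_int.integrable))
  refine ⟨⟨fun j hj => ⟨stronglyMeasurable_condExp, ?_⟩, h_terminal.le,
    fun j hj => (hstep j hj).mono fun _ h => h.2⟩, hstep⟩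
  exact (hθ.memLinfMinus hset.ξ_int hset.β_int hM.2 hr j.zero_le hj).condExp
end
end

section
/- Perfect control variate for the lower recursion: if r* ∈ A_0 satisfies the optimality condition (r_i^*)^⊤ E_i[β_{i+1} Y_{i+1}] − F_i^{#}(r_i^*) = F_i(E_i[β_{i+1} Y_{i+1}]) P-a.s. for all i = 0,...,J-1, and M* is the Doob martingale of βY, i.e. M*_j = Σ_{i=0}^{j-1} (β_{i+1}Y_{i+1} − E_i[β_{i+1}Y_{i+1}]), then θ^{low}_j(r*, M*) = Y_j P-a.s. for every j = 0,...,J. -/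
/-!
The increment of the Doob martingale of `βY` is `ΔM*_{i+1} = β_{i+1} Y_{i+1} - E_i[β_{i+1} Y_{i+1}]`.
So once `θ_{i+1} = Y_{i+1}`, the pathwise terms `r_i^⊤ β_{i+1} θ_{i+1}` and `r_i^⊤ β_{i+1} Y_{i+1}`
in the lower recursion cancel, leaving `r_i^⊤ E_i[β_{i+1} Y_{i+1}] - F_i^#(r_i)`, which equals
`F_i(E_i[β_{i+1} Y_{i+1}]) = Y_i` by the optimality condition. Backward induction from `θ_J = ξ = Y_J`
concludes.
-/

open MeasureTheory
open scoped ENNReal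

noncomputable section

variable {Ω : Type*} {m0 : MeasurableSpace Ω}

lemma dotp_sub_dotp_sub {D : ℕ} (r a c : Fin D → ℝ) :
    dotp r a - dotp r (a - c) = dotp r c := by
  simp only [dotp, Pi.sub_apply, mul_sub, Finset.sum_sub_distrib, sub_sub_cancel]

lemma doobMart_succ_sub (μ : Measure Ω) (ℱ : Filtration ℕ m0) {D : ℕ}
    (Z : ℕ → Ω → Fin D → ℝ) (j : ℕ) (ω : Ω) :
    (fun d => doobMart μ ℱ Z (j + 1) ω d - doobMart μ ℱ Z j ω d)
      = Z (j + 1) ω - cexpV μ (ℱ j) (Z (j + 1)) ω := by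
  ext d
  simp only [doobMart, Finset.sum_range_succ, add_sub_cancel_left, Pi.sub_apply]

lemma thetaLow_doobMart_ae_eq_of_succ (μ : Measure Ω) (ℱ : Filtration ℕ m0)
    {J D : ℕ} {F : ℕ → Ω → (Fin D → ℝ) → ℝ} {β : ℕ → Ω → Fin D → ℝ} {ξ : Ω → ℝ}
    {Y θ : ℕ → Ω → ℝ} {r : ℕ → Ω → Fin D → ℝ} {j₀ i : ℕ} (hj₀ : j₀ ≤ i) (hiJ : i < J)
    (hY : IsSolution μ ℱ J D F β ξ Y) (hropt : OptimalityCond μ ℱ j₀ J D F β Y r)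
    (hθ : IsThetaLowFrom μ j₀ J D F β ξ r (doobMart μ ℱ (bprod β Y)) θ)
    (hsucc : θ (i + 1) =ᵐ[μ] Y (i + 1)) :
    θ i =ᵐ[μ] Y i := by
  filter_upwards [hθ.2 i hj₀ hiJ, hY.2.2 i hiJ, hropt i hj₀ hiJ, hsucc]
    with ω hθi hYi hopt hθsucc
  rw [hθi, hYi, ← hopt, hθsucc, doobMart_succ_sub]
  exact congrArg (· - rconj (F i ω) (r i ω)) (dotp_sub_dotp_sub _ (bprod β Y (i + 1) ω) _)

theorem perfect_control_variate_general
    (μ : Measure Ω) (ℱ : Filtration ℕ m0)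
    (J D : ℕ) (F : ℕ → Ω → (Fin D → ℝ) → ℝ) (β : ℕ → Ω → Fin D → ℝ) (ξ : Ω → ℝ)
    (Y : ℕ → Ω → ℝ) (hY : IsSolution μ ℱ J D F β ξ Y)
    (r : ℕ → Ω → Fin D → ℝ)
    (hropt : OptimalityCond μ ℱ 0 J D F β Y r)
    (θ : ℕ → Ω → ℝ)
    (hθ : IsThetaLowFrom μ 0 J D F β ξ r (doobMart μ ℱ (bprod β Y)) θ) :
    ∀ j ≤ J, θ j =ᵐ[μ] Y j := by
  intro j hj
  induction hj using Nat.decreasingInduction with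
  | self => filter_upwards [hθ.1, hY.2.1] with ω hθJ hYJ using hθJ.trans hYJ.symm
  | of_succ i hiJ ih =>
    exact thetaLow_doobMart_ae_eq_of_succ μ ℱ (Nat.zero_le i) hiJ hY hropt hθ ih

/-- Perfect control variate: if `r* ∈ A_0` satisfies the optimality condition
and `M*` is the Doob martingale of `βY`, then `θ^{low}_j(r*,M*) = Y_j` `P`-a.s. for every
`j = 0,…,J`. -/
theorem perfect_control_variate
    (μ : Measure Ω) [IsProbabilityMeasure μ] (ℱ : Filtration ℕ m0)
    (J D : ℕ) (F : ℕ → Ω → (Fin D → ℝ) → ℝ) (β : ℕ → Ω → Fin D → ℝ) (ξ : Ω → ℝ)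
    (hset : Setting μ ℱ J D F β ξ)
    (Y : ℕ → Ω → ℝ) (hY : IsSolution μ ℱ J D F β ξ Y)
    (r : ℕ → Ω → Fin D → ℝ)
    (hr : IsAdmissibleFrom μ ℱ 0 J D F r)
    (hropt : OptimalityCond μ ℱ 0 J D F β Y r)
    (θ : ℕ → Ω → ℝ)
    (hθ : IsThetaLowFrom μ 0 J D F β ξ r (doobMart μ ℱ (bprod β Y)) θ) :
    ∀ j ≤ J, θ j =ᵐ[μ] Y j :=
  perfect_control_variate_general μ ℱ J D F β ξ Y hY r hropt θ hθ

end
end
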